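/- arXiv:1305.6014 — 2 statements merged into one kernel-verified Lean document; each statement's English description precedes it below -/
import Mathlib

section
/- Let B → K and C → K be ring homomorphisms with C → K surjective, A = B ×_K C, and let M be an A-module. If M ⊗_A B is a finitely generated B-module and M ⊗_A C is a finitely generated C-module, then M is a finitely generated A-module. -/
open TensorProduct

/-! Choose finite `s, t ⊆ M` whose images generate `B ⊗ M` and `C ⊗ M`, and put
`P = M ⧸ span (s ∪ t)`; by right exactness `B ⊗ P = C ⊗ P = 0`, so it suffices that an `A`-module
killed by both base changes vanishes. As `A → B` is surjective with kernel `I`, `B ⊗ P = P ⧸ I P`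
gives `P = I P`. For `i ∈ I`, the elements of `A` lying over `(0, i c) ∈ B ×_K C` form an `A`-linear
`τ : C → A` with `τ 1 = i`, so multiplication by `i` on `P` factors through `C ⊗ P = 0`; hence
`I P = 0`. -/

namespace Submodule

variable {R S M : Type*} [CommRing R] [CommRing S] [Algebra R S] [AddCommGroup M] [Module R M]

theorem exists_finset_baseChange_span_eq_top [Module.Finite S (S ⊗[R] M)] :
    ∃ s : Finset M, (span R (s : Set M)).baseChange S = ⊤ := by
  classical
  have hspan : span S (TensorProduct.mk R S M 1 '' Set.univ) = ⊤ := by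
    rw [← baseChange_span, span_univ, baseChange_top]
  obtain ⟨t, hts, ht⟩ := (fg_span_iff_fg_span_finset_subset _).mp
    (hspan ▸ Module.Finite.fg_top (R := S) (M := S ⊗[R] M))
  obtain ⟨s, -, rfl⟩ := Finset.subset_set_image_iff.mp hts
  exact ⟨s, by rw [baseChange_span, ← Finset.coe_image, ← ht, hspan]⟩

theorem subsingleton_tensor_quotient_of_baseChange_eq_top {p N : Submodule R M}
    (hp : p.baseChange S = ⊤) (hpN : p ≤ N) : Subsingleton (S ⊗[R] (M ⧸ N)) := by
  have hsurj : Function.Surjective (N.subtype.lTensor S) := by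
    rw [← LinearMap.baseChange_eq_ltensor, ← LinearMap.range_eq_top]
    exact top_unique (hp ▸ baseChange_mono S hpN)
  rw [(tensorQuotientEquiv S N).toEquiv.subsingleton_congr, Quotient.subsingleton_iff]
  exact LinearMap.range_eq_top.mpr hsurj

end Submodule

theorem TensorProduct.smul_eq_zero_of_subsingleton {R S P : Type*} [CommSemiring R]
    [AddCommMonoid S] [Module R S] [AddCommMonoid P] [Module R P] [Subsingleton (S ⊗[R] P)]
    (τ : S →ₗ[R] R) (s : S) (p : P) : τ s • p = 0 := by
  calc τ s • p = TensorProduct.lid R P (τ.rTensor P (s ⊗ₜ p)) := by simp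
    _ = 0 := by rw [Subsingleton.elim (s ⊗ₜ[R] p) 0, map_zero, map_zero]

theorem smul_top_eq_top_of_subsingleton_tensor {R S P : Type*} [CommRing R] [CommRing S]
    [Algebra R S] [AddCommGroup P] [Module R P] [Subsingleton (S ⊗[R] P)]
    (hf : Function.Surjective (algebraMap R S)) :
    RingHom.ker (algebraMap R S) • (⊤ : Submodule R P) = ⊤ := by
  let e : (R ⧸ RingHom.ker (algebraMap R S)) ≃ₐ[R] S :=
    Ideal.quotientKerAlgEquivOfSurjective (f := Algebra.ofId R S) hf
  rw [← Submodule.Quotient.subsingleton_iff,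
    ← (quotTensorEquivQuotSMul P _).toEquiv.subsingleton_congr,
    (TensorProduct.congr e.toLinearEquiv (LinearEquiv.refl R P)).toEquiv.subsingleton_congr]
  infer_instance

section Ferrand

variable {A B C K : Type*} [CommRing A] [CommRing B] [CommRing C] [CommRing K]
  [Algebra A B] [Algebra A C] [Algebra B K] [Algebra C K]

theorem surjective_algebraMap_of_isPullback (hsurj : Function.Surjective (algebraMap C K))
    (hpull : ∀ (b : B) (c : C), algebraMap B K b = algebraMap C K c →
      ∃! a : A, algebraMap A B a = b ∧ algebraMap A C a = c) :
    Function.Surjective (algebraMap A B) := by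
  intro b
  obtain ⟨c, hc⟩ := hsurj (algebraMap B K b)
  obtain ⟨a, ⟨hab, -⟩, -⟩ := hpull b c hc.symm
  exact ⟨a, hab⟩

variable [Algebra A K] [IsScalarTower A B K] [IsScalarTower A C K]

theorem exists_linearMap_map_one_of_isPullback
    (hpull : ∀ (b : B) (c : C), algebraMap B K b = algebraMap C K c →
      ∃! a : A, algebraMap A B a = b ∧ algebraMap A C a = c)
    {i : A} (hi : algebraMap A B i = 0) : ∃ τ : C →ₗ[A] A, τ 1 = i := by
  have hK : ∀ c : C, algebraMap B K 0 = algebraMap C K (algebraMap A C i * c) := fun c => by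
    rw [map_zero, map_mul, ← IsScalarTower.algebraMap_apply, IsScalarTower.algebraMap_apply A B K,
      hi, map_zero, zero_mul]
  choose τ hτ huniq using fun c => hpull 0 _ (hK c)
  refine ⟨{ toFun := τ, map_add' := fun c c' => ?_, map_smul' := fun a c => ?_ }, ?_⟩
  · refine (huniq _ _ ⟨?_, ?_⟩).symm
    · rw [map_add, (hτ c).1, (hτ c').1, add_zero]
    · rw [map_add, (hτ c).2, (hτ c').2, mul_add]
  · refine (huniq _ _ ⟨?_, ?_⟩).symm
    · rw [RingHom.id_apply, smul_eq_mul, map_mul, (hτ c).1, mul_zero]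
    · rw [RingHom.id_apply, smul_eq_mul, map_mul, (hτ c).2, Algebra.smul_def, mul_left_comm]
  · exact (huniq 1 i ⟨hi, (mul_one _).symm⟩).symm

theorem subsingleton_of_subsingleton_tensor_of_isPullback
    (hsurj : Function.Surjective (algebraMap C K))
    (hpull : ∀ (b : B) (c : C), algebraMap B K b = algebraMap C K c →
      ∃! a : A, algebraMap A B a = b ∧ algebraMap A C a = c)
    (P : Type*) [AddCommGroup P] [Module A P] [Subsingleton (B ⊗[A] P)]
    [Subsingleton (C ⊗[A] P)] : Subsingleton P := by
  have htop := smul_top_eq_top_of_subsingleton_tensor (P := P)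
    (surjective_algebraMap_of_isPullback hsurj hpull)
  have hbot : RingHom.ker (algebraMap A B) • (⊤ : Submodule A P) = ⊥ := by
    refine eq_bot_iff.mpr (Submodule.smul_le.mpr fun i hi p _ => ?_)
    obtain ⟨τ, rfl⟩ := exists_linearMap_map_one_of_isPullback hpull hi
    exact (Submodule.mem_bot A).mpr (TensorProduct.smul_eq_zero_of_subsingleton τ 1 p)
  rw [← Submodule.subsingleton_iff A, ← subsingleton_iff_bot_eq_top, ← htop, hbot]

end Ferrand

/-- Descent of finite generation of modules through a Ferrand fiber product:
if `B ⊗_A M` and `C ⊗_A M` are finitely generated, then so is `M`. -/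
theorem ferrand_descent_module_finite
    (A B C K : Type*) [CommRing A] [CommRing B] [CommRing C] [CommRing K]
    [Algebra A B] [Algebra A C] [Algebra A K] [Algebra B K] [Algebra C K]
    [IsScalarTower A B K] [IsScalarTower A C K]
    (hsurj : Function.Surjective (algebraMap C K))
    (hpull : ∀ (b : B) (c : C), algebraMap B K b = algebraMap C K c →
      ∃! a : A, algebraMap A B a = b ∧ algebraMap A C a = c)
    (M : Type*) [AddCommGroup M] [Module A M]
    (hB : Module.Finite B (B ⊗[A] M))
    (hC : Module.Finite C (C ⊗[A] M)) :
    Module.Finite A M := by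
  classical
  obtain ⟨s, hs⟩ := Submodule.exists_finset_baseChange_span_eq_top (R := A) (S := B) (M := M)
  obtain ⟨t, ht⟩ := Submodule.exists_finset_baseChange_span_eq_top (R := A) (S := C) (M := M)
  set N := Submodule.span A ((s ∪ t : Finset M) : Set M)
  have hBN : Subsingleton (B ⊗[A] (M ⧸ N)) :=
    Submodule.subsingleton_tensor_quotient_of_baseChange_eq_top hs (Submodule.span_mono (by simp))
  have hCN : Subsingleton (C ⊗[A] (M ⧸ N)) :=
    Submodule.subsingleton_tensor_quotient_of_baseChange_eq_top ht (Submodule.span_mono (by simp))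
  have hP := subsingleton_of_subsingleton_tensor_of_isPullback hsurj hpull (M ⧸ N)
  exact ⟨⟨s ∪ t, Submodule.Quotient.subsingleton_iff.mp hP⟩⟩
end

section
/- Let B → K and C → K be ring homomorphisms with C → K surjective, A = B ×_K C, and let M be an A-module with M ⊗_A B = 0 and M ⊗_A C = 0. Then M = 0. -/
/-!
Since `C → K` is onto, so is `A → B`; with `I = ker (A → B)` this gives `M ⊗_A B ≅ M / I M`,
hence `M = I M`. On the other hand each `i ∈ I` corresponds to the pair `(0, i)` of the fiber
product, so `c ↦ (0, c i)` is an `A`-linear map `C → A` sending `1` to `i`; tensoring it with `M`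
turns `M ⊗_A C = 0` into `i M = 0`. Thus `M = I M = 0`.
-/

open TensorProduct

section Tensor

variable {R M N : Type*} [CommRing R] [AddCommGroup M] [Module R M] [AddCommGroup N] [Module R N]

theorem smul_eq_zero_of_subsingleton_tensor (hN : Subsingleton (M ⊗[R] N))
    (f : N →ₗ[R] R) (n : N) (m : M) : f n • m = 0 := by
  rw [← TensorProduct.rid_tmul, ← LinearMap.lTensor_tmul, Subsingleton.elim (m ⊗ₜ[R] n) 0,
    map_zero, map_zero]

variable {S : Type*} [CommRing S] [Algebra R S]

theorem ker_smul_top_eq_top_of_subsingleton_tensor (hsurj : Function.Surjective (algebraMap R S))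
    (hS : Subsingleton (M ⊗[R] S)) :
    RingHom.ker (algebraMap R S) • (⊤ : Submodule R M) = ⊤ := by
  let e : M ⊗[R] S ≃ₗ[R] M ⧸ RingHom.ker (algebraMap R S) • (⊤ : Submodule R M) :=
    (LinearEquiv.lTensor M
      (Ideal.quotientKerAlgEquivOfSurjective (f := Algebra.ofId R S) hsurj).symm.toLinearEquiv)
      ≪≫ₗ tensorQuotEquivQuotSMul M _
  exact Submodule.Quotient.subsingleton_iff.mp e.symm.injective.subsingleton

end Tensor

section FiberProduct

variable (A B C K : Type*) [CommRing A] [CommRing B] [CommRing C] [CommRing K]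
  [Algebra A B] [Algebra A C] [Algebra B K] [Algebra C K]

def IsFiberProduct : Prop :=
  ∀ (b : B) (c : C), algebraMap B K b = algebraMap C K c →
    ∃! a : A, algebraMap A B a = b ∧ algebraMap A C a = c

variable {A B C K}

theorem IsFiberProduct.algebraMap_surjective (h : IsFiberProduct A B C K)
    (hsurj : Function.Surjective (algebraMap C K)) : Function.Surjective (algebraMap A B) := by
  intro b
  obtain ⟨c, hc⟩ := hsurj (algebraMap B K b)
  obtain ⟨a, ⟨ha, -⟩, -⟩ := h b c hc.symm
  exact ⟨a, ha⟩

variable [Algebra A K] [IsScalarTower A B K] [IsScalarTower A C K]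

theorem IsFiberProduct.ext (h : IsFiberProduct A B C K) {a a' : A}
    (hB : algebraMap A B a = algebraMap A B a') (hC : algebraMap A C a = algebraMap A C a') :
    a = a' := by
  refine (h (algebraMap A B a) (algebraMap A C a) ?_).unique ⟨rfl, rfl⟩ ⟨hB.symm, hC.symm⟩
  rw [← IsScalarTower.algebraMap_apply, ← IsScalarTower.algebraMap_apply]

theorem IsFiberProduct.exists_linearMap_apply_one (h : IsFiberProduct A B C K) {i : A}
    (hi : i ∈ RingHom.ker (algebraMap A B)) : ∃ φ : C →ₗ[A] A, φ 1 = i := by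
  rw [RingHom.mem_ker] at hi
  have hK (c : C) : algebraMap B K 0 = algebraMap C K (c * algebraMap A C i) := by
    rw [map_zero, map_mul, ← IsScalarTower.algebraMap_apply, IsScalarTower.algebraMap_apply A B K,
      hi, map_zero, mul_zero]
  choose φ hφB hφC using fun c ↦ (h 0 (c * algebraMap A C i) (hK c)).exists
  refine ⟨{ toFun := φ, map_add' := ?_, map_smul' := ?_ }, show φ 1 = i from h.ext ?_ ?_⟩
  · intro c c'
    refine h.ext ?_ ?_ <;> simp only [map_add, hφB, hφC, add_zero, add_mul]
  · intro a c
    refine h.ext ?_ ?_ <;>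
      simp only [smul_eq_mul, RingHom.id_apply, map_mul, hφB, hφC, mul_zero, Algebra.smul_def,
        mul_assoc]
  · rw [hφB, hi]
  · rw [hφC, one_mul]

end FiberProduct

/-- If `M ⊗_A B = 0` and `M ⊗_A C = 0` for a Ferrand fiber product `A = B ×_K C`,
then `M = 0`. -/
theorem ferrand_module_vanishing
    (A B C K : Type*) [CommRing A] [CommRing B] [CommRing C] [CommRing K]
    [Algebra A B] [Algebra A C] [Algebra A K] [Algebra B K] [Algebra C K]
    [IsScalarTower A B K] [IsScalarTower A C K]
    (hsurj : Function.Surjective (algebraMap C K))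
    (hpull : ∀ (b : B) (c : C), algebraMap B K b = algebraMap C K c →
      ∃! a : A, algebraMap A B a = b ∧ algebraMap A C a = c)
    (M : Type*) [AddCommGroup M] [Module A M]
    (hB : Subsingleton (M ⊗[A] B))
    (hC : Subsingleton (M ⊗[A] C)) :
    Subsingleton M := by
  have hA : IsFiberProduct A B C K := hpull
  have hIM : RingHom.ker (algebraMap A B) • (⊤ : Submodule A M) = ⊤ :=
    ker_smul_top_eq_top_of_subsingleton_tensor (hA.algebraMap_surjective hsurj) hB
  have hI : RingHom.ker (algebraMap A B) ≤ Module.annihilator A M := by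
    intro i hi
    obtain ⟨φ, hφ⟩ := hA.exists_linearMap_apply_one hi
    exact Module.mem_annihilator.mpr fun m ↦ hφ ▸ smul_eq_zero_of_subsingleton_tensor hC φ 1 m
  rw [← Submodule.annihilator_top, Submodule.le_annihilator_iff, hIM] at hI
  exact (Submodule.subsingleton_iff A).mp (subsingleton_iff_bot_eq_top.mp hI.symm)
end
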